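/- Let r ≥ 1 and define S(k;r) := ∑_{i=1}^k i^r and f₁(k;r) := (1/2) · r^r/(r+1)^{r+1} · (2k+1)^{r+1}/S(k;r). Then f₁(k;r) is nonincreasing in the integer k ≥ 1. -/

import Mathlib

/-!
Write `D(i) = (2i+1)^(r+1) - (2i-1)^(r+1)`, so that `(2k+1)^(r+1) = 1 + ∑_{i ≤ k} D(i)` and
`S(k;r) = ∑_{i ≤ k} i^r`. Going from `k` to `k+1` the claim reduces to
`D(k+1) · S(k;r) ≤ (2k+1)^(r+1) · (k+1)^r`, which follows by summing the termwise bounds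
`D(k+1) · i^r ≤ D(i) · (k+1)^r`, i.e. from `D(a) / a^r` being nonincreasing in `a`.
By homogeneity `D(a) / a^r = φ(1/a) / (1/a)` with `φ(s) = (2+s)^(r+1) - (2-s)^(r+1)`, and this
secant slope through `φ(0) = 0` is monotone because `φ` is convex on `[0, 2]`: its derivative
`(r+1)((2-s)^r + (2+s)^r)` is nondecreasing there by convexity of `x ↦ x^r`.
-/

open Real Finset

theorem ConvexOn.map_sub_add_map_add_le {s : Set ℝ} {f : ℝ → ℝ} (hf : ConvexOn ℝ s f)
    {c t u : ℝ} (hl : c - t ∈ s) (hr : c + t ∈ s) (hu : |u| ≤ t) :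
    f (c - u) + f (c + u) ≤ f (c - t) + f (c + t) := by
  obtain rfl | ht := (abs_nonneg u |>.trans hu).eq_or_lt
  · rw [abs_nonpos_iff.mp hu]
  obtain ⟨hu₁, hu₂⟩ := abs_le.mp hu
  have hα : 0 ≤ (t + u) / (2 * t) := div_nonneg (by linarith) (by linarith)
  have hβ : 0 ≤ (t - u) / (2 * t) := div_nonneg (by linarith) (by linarith)
  have hαβ : (t + u) / (2 * t) + (t - u) / (2 * t) = 1 := by field_simp; ring
  have hminus := hf.2 hl hr hα hβ hαβ
  have hplus := hf.2 hl hr hβ hα (by linarith)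
  simp only [smul_eq_mul] at hminus hplus
  rw [show (t + u) / (2 * t) * (c - t) + (t - u) / (2 * t) * (c + t) = c - u by
    field_simp; ring] at hminus
  rw [show (t - u) / (2 * t) * (c - t) + (t + u) / (2 * t) * (c + t) = c + u by
    field_simp; ring] at hplus
  linear_combination hminus + hplus + (f (c - t) + f (c + t)) * hαβ

theorem hasDerivAt_rpow_add_sub_rpow_sub {p : ℝ} (hp : 1 ≤ p) (c s : ℝ) :
    HasDerivAt (fun x => (c + x) ^ p - (c - x) ^ p)
      (p * ((c - s) ^ (p - 1) + (c + s) ^ (p - 1))) s := by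
  have hplus := ((hasDerivAt_id s).const_add c).rpow_const (p := p) (Or.inr hp)
  have hminus := ((hasDerivAt_id s).const_sub c).rpow_const (p := p) (Or.inr hp)
  exact (hplus.sub hminus).congr_deriv (by simp only [id]; ring)

theorem convexOn_rpow_add_sub_rpow_sub {p : ℝ} (hp : 2 ≤ p) (c : ℝ) :
    ConvexOn ℝ (Set.Icc 0 c) (fun x => (c + x) ^ p - (c - x) ^ p) := by
  have hderiv := hasDerivAt_rpow_add_sub_rpow_sub (by linarith : 1 ≤ p) c
  refine MonotoneOn.convexOn_of_deriv (convex_Icc 0 c)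
    (fun x _ => (hderiv x).continuousAt.continuousWithinAt)
    (fun x _ => (hderiv x).differentiableAt.differentiableWithinAt) ?_
  rw [interior_Icc]
  intro x hx y hy hxy
  rw [(hderiv x).deriv, (hderiv y).deriv]
  have hconvex := convexOn_rpow (by linarith : 1 ≤ p - 1)
  have hsum := hconvex.map_sub_add_map_add_le (c := c) (t := y) (u := x)
    (Set.mem_Ici.mpr (by linarith [hy.2])) (Set.mem_Ici.mpr (by linarith [hy.1, hy.2]))
    (abs_le.mpr ⟨by linarith [hx.1], hxy⟩)
  exact mul_le_mul_of_nonneg_left hsum (by linarith)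

theorem rpow_add_sub_rpow_sub_div_le {p c s t : ℝ} (hp : 2 ≤ p) (hs : 0 < s) (hst : s ≤ t)
    (htc : t ≤ c) :
    ((c + s) ^ p - (c - s) ^ p) / s ≤ ((c + t) ^ p - (c - t) ^ p) / t := by
  have := (convexOn_rpow_add_sub_rpow_sub hp c).secant_mono (a := 0)
    ⟨le_rfl, by linarith⟩ ⟨hs.le, by linarith⟩ ⟨by linarith, htc⟩ hs.ne' (by linarith) hst
  simpa using this

theorem two_mul_add_one_rpow_sub_two_mul_sub_one_rpow_eq (r : ℝ) {a : ℝ} (ha : 1 / 2 ≤ a) :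
    (2 * a + 1) ^ (r + 1) - (2 * a - 1) ^ (r + 1)
      = a ^ r * (((2 + a⁻¹) ^ (r + 1) - (2 - a⁻¹) ^ (r + 1)) / a⁻¹) := by
  have ha₀ : 0 < a := by linarith
  have hinv : a⁻¹ ≤ 2 := by rw [inv_le_comm₀ ha₀ two_pos]; linarith
  rw [show 2 * a + 1 = a * (2 + a⁻¹) by field_simp, show 2 * a - 1 = a * (2 - a⁻¹) by field_simp,
    mul_rpow ha₀.le (by positivity), mul_rpow ha₀.le (by linarith), rpow_add_one ha₀.ne']
  field_simp

theorem two_mul_add_one_rpow_sub_two_mul_sub_one_rpow_mul_le {r a b : ℝ} (hr : 1 ≤ r)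
    (ha : 1 / 2 ≤ a) (hab : a ≤ b) :
    ((2 * b + 1) ^ (r + 1) - (2 * b - 1) ^ (r + 1)) * a ^ r
      ≤ ((2 * a + 1) ^ (r + 1) - (2 * a - 1) ^ (r + 1)) * b ^ r := by
  have ha₀ : 0 < a := by linarith
  have hb₀ : 0 < b := ha₀.trans_le hab
  have hslope := rpow_add_sub_rpow_sub_div_le (c := 2) (by linarith : 2 ≤ r + 1)
    (inv_pos.mpr hb₀) (inv_anti₀ ha₀ hab)
    (by rw [inv_le_comm₀ ha₀ two_pos]; linarith)
  rw [two_mul_add_one_rpow_sub_two_mul_sub_one_rpow_eq r ha,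
    two_mul_add_one_rpow_sub_two_mul_sub_one_rpow_eq r (ha.trans hab)]
  calc _ = a ^ r * b ^ r * (((2 + b⁻¹) ^ (r + 1) - (2 - b⁻¹) ^ (r + 1)) / b⁻¹) := by ring
    _ ≤ a ^ r * b ^ r * (((2 + a⁻¹) ^ (r + 1) - (2 - a⁻¹) ^ (r + 1)) / a⁻¹) := by gcongr
    _ = _ := by ring

theorem sum_Icc_two_mul_add_one_rpow_sub (p : ℝ) (k : ℕ) :
    ∑ i ∈ Icc 1 k, ((2 * (i : ℝ) + 1) ^ p - (2 * (i : ℝ) - 1) ^ p) = (2 * (k : ℝ) + 1) ^ p - 1 := by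
  induction k with
  | zero => simp
  | succ n ih =>
    rw [sum_Icc_succ_top (by omega), ih]
    push_cast
    ring_nf

theorem two_mul_add_one_rpow_div_sum_Icc_rpow_succ_le {r : ℝ} (hr : 1 ≤ r) {k : ℕ} (hk : 1 ≤ k) :
    (2 * ((k + 1 : ℕ) : ℝ) + 1) ^ (r + 1) / ∑ i ∈ Icc 1 (k + 1), (i : ℝ) ^ r
      ≤ (2 * (k : ℝ) + 1) ^ (r + 1) / ∑ i ∈ Icc 1 k, (i : ℝ) ^ r := by
  set S := ∑ i ∈ Icc 1 k, (i : ℝ) ^ r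
  have hS : 0 < S := sum_pos (fun i hi => rpow_pos_of_pos (by
    exact_mod_cast (mem_Icc.mp hi).1) r) ⟨1, mem_Icc.mpr ⟨le_rfl, hk⟩⟩
  have hP : 0 ≤ ((k : ℝ) + 1) ^ r := by positivity
  have hS_succ : ∑ i ∈ Icc 1 (k + 1), (i : ℝ) ^ r = S + ((k : ℝ) + 1) ^ r := by
    rw [sum_Icc_succ_top (by omega)]; push_cast; rfl
  have htermwise : ∀ i ∈ Icc 1 k,
      ((2 * ((k : ℝ) + 1) + 1) ^ (r + 1) - (2 * ((k : ℝ) + 1) - 1) ^ (r + 1)) * (i : ℝ) ^ r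
        ≤ ((2 * (i : ℝ) + 1) ^ (r + 1) - (2 * (i : ℝ) - 1) ^ (r + 1)) * ((k : ℝ) + 1) ^ r := by
    intro i hi
    have hi₁ : (1 : ℝ) ≤ i := by exact_mod_cast (mem_Icc.mp hi).1
    have hik : (i : ℝ) ≤ k := by exact_mod_cast (mem_Icc.mp hi).2
    exact two_mul_add_one_rpow_sub_two_mul_sub_one_rpow_mul_le hr (by linarith) (by linarith)
  have hsum := sum_le_sum htermwise
  rw [← mul_sum, ← sum_mul, sum_Icc_two_mul_add_one_rpow_sub,
    show 2 * ((k : ℝ) + 1) - 1 = 2 * k + 1 by ring] at hsum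
  rw [hS_succ, div_le_div_iff₀ (by positivity) hS]
  push_cast
  linear_combination hsum + hP

theorem stmt_8 (r : ℝ) (hr : 1 ≤ r) :
    AntitoneOn (fun k : ℕ =>
      (1 / 2) * (r ^ r / (r + 1) ^ (r + 1)) *
        ((2 * (k : ℝ) + 1) ^ (r + 1) / ∑ i ∈ Finset.Icc 1 k, (i : ℝ) ^ r))
      (Set.Ici 1) := by
  refine antitoneOn_nat_Ici_of_succ_le fun k hk => ?_
  have hr₀ : 0 < r := by linarith
  exact mul_le_mul_of_nonneg_left (two_mul_add_one_rpow_div_sum_Icc_rpow_succ_le hr hk)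
    (by positivity)
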